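/- For an irrational real number s, limsup_{|t|→∞} log α₁(h_t Λ_s)/log|t| = 1 if and only if s is a Liouville number (i.e., μ(s) = ∞). -/

import Mathlib

open MeasureTheory Filter Matrix Real ENNReal

noncomputable section

/-- `SL(n, ℝ)`. -/
abbrev SLR (n : ℕ) := Matrix.SpecialLinearGroup (Fin n) ℝ

instance (n : ℕ) : TopologicalSpace (SLR n) :=
  TopologicalSpace.induced (fun g => (g : Matrix (Fin n) (Fin n) ℝ)) inferInstance

/-- The image of `SL(n, ℤ)` in `SL(n, ℝ)`. -/
def latticeGamma (n : ℕ) : Subgroup (SLR n) :=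
  (Matrix.SpecialLinearGroup.map (n := Fin n) (Int.castRingHom ℝ)).range

/-- The space of unimodular lattices `X_n = SL(n,ℝ)/SL(n,ℤ)`. -/
abbrev LatticeSpace (n : ℕ) := SLR n ⧸ latticeGamma n

instance (n : ℕ) : MeasurableSpace (LatticeSpace n) := borel _

/-- The real vector `g · m` of the lattice `g ℤⁿ` coming from the integer vector `m`. -/
def vecOf (n : ℕ) (g : SLR n) (m : Fin n → ℤ) : Fin n → ℝ :=
  (g : Matrix (Fin n) (Fin n) ℝ).mulVec (fun i => (m i : ℝ))

/-- Euclidean norm on `Fin n → ℝ`. -/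
def eNorm {n : ℕ} (v : Fin n → ℝ) : ℝ := ‖(WithLp.equiv 2 (Fin n → ℝ)).symm v‖

/-- The lattice `Λ` contains a nonzero vector lying in `A`. -/
def Intersects (n : ℕ) (Λ : LatticeSpace n) (A : Set (Fin n → ℝ)) : Prop :=
  ∀ g : SLR n, (QuotientGroup.mk g : LatticeSpace n) = Λ →
    ∃ m : Fin n → ℤ, m ≠ 0 ∧ vecOf n g m ∈ A

/-- `α₁(Λ) = sup_{0 ≠ v ∈ Λ} 1/‖v‖` (Euclidean norm). -/
def alpha1 (n : ℕ) (Λ : LatticeSpace n) : ℝ :=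
  sSup {r : ℝ | ∃ g : SLR n, (QuotientGroup.mk g : LatticeSpace n) = Λ ∧
    ∃ m : Fin n → ℤ, m ≠ 0 ∧ r = 1 / eNorm (vecOf n g m)}

/-- The horocycle matrix `h_t = [[1,t],[0,1]]`. -/
def hMat (t : ℝ) : SLR 2 := ⟨!![1, t; 0, 1], by simp [Matrix.det_fin_two_of]⟩

/-- The matrix `[[1,0],[s,1]]`, so that `gMat s · ℤ² = Λ_s = {(m, sm+n)}`. -/
def gMat (s : ℝ) : SLR 2 := ⟨!![1, 0; s, 1], by simp [Matrix.det_fin_two_of]⟩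

/-- The point `Λ_s` of the space of lattices. -/
def LambdaS (s : ℝ) : LatticeSpace 2 := QuotientGroup.mk (gMat s)

/-- The approximation exponent `μ(s)`, valued in `[0,∞]`:
the sup of all `ν` such that `|s - p/q| < q^{-ν}` has infinitely many rational solutions. -/
def approxExp (s : ℝ) : ℝ≥0∞ :=
  ⨆ (ν : ℝ) (_ : {pq : ℤ × ℕ+ |
    |s - (pq.1 : ℝ) / ((pq.2 : ℕ) : ℝ)| < ((pq.2 : ℕ) : ℝ) ^ (-ν)}.Infinite),
    ENNReal.ofReal ν

/-!
The vector of `h_t Λ_s` coming from `(q, -p) ∈ ℤ²` is `v = (q + t r, r)` with `r = qs - p`.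
Since `(q, -p)` is recovered from `v` by a matrix with entries `O(1 + |t|)`, every nonzero vector
has `‖v‖ ≫ 1/|t|`, so `α₁(h_t Λ_s) ≪ |t|` and the limsup is at most `1`.

If `q^k |r| < q`, then at `t = -q/r` this vector is `(0, r)`, so `α₁ ≥ 1/|r| = |t|/q` with
`q^k < |t|`, i.e. `log α₁ / log |t| ≥ 1 - 1/k`. When `μ(s) = ∞` this happens for every `k` and
arbitrarily large `q`, so the limsup is `1`.

If `μ(s) < ∞`, then for some `k` only finitely many such `(p, q)` exist, and irrationality turns
this into `c |q| ≤ |q|^k |qs - p|` for all `q ≠ 0`. Combined with `|q| ≤ (1 + |t|) ‖v‖` and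
`|r| ≤ ‖v‖` it gives `c (1 + |t|) ≤ ((1 + |t|) ‖v‖)^k`, hence `α₁ ≪ |t|^{1 - 1/k}` and the
limsup is at most `1 - 1/k`.
-/

section Lattice

variable {n : ℕ}

lemma vecOf_mul_map (g : SLR n) (γ : SpecialLinearGroup (Fin n) ℤ) (m : Fin n → ℤ) :
    vecOf n (g * SpecialLinearGroup.map (Int.castRingHom ℝ) γ) m =
      vecOf n g ((γ : Matrix (Fin n) (Fin n) ℤ) *ᵥ m) := by
  unfold vecOf
  rw [Matrix.SpecialLinearGroup.coe_mul, ← mulVec_mulVec]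
  congr 1
  ext i
  exact (RingHom.map_mulVec (Int.castRingHom ℝ) _ m i).symm

lemma mulVec_ne_zero (γ : SpecialLinearGroup (Fin n) ℤ) {m : Fin n → ℤ} (hm : m ≠ 0) :
    (γ : Matrix (Fin n) (Fin n) ℤ) *ᵥ m ≠ 0 :=
  (mulVec_injective_of_det_ne_zero (by simp)).ne_iff' (mulVec_zero _) |>.mpr hm

lemma alpha1_mk (g : SLR n) :
    alpha1 n (QuotientGroup.mk g) =
      sSup {r : ℝ | ∃ m : Fin n → ℤ, m ≠ 0 ∧ r = 1 / eNorm (vecOf n g m)} := by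
  rw [alpha1]
  congr 1
  ext r
  constructor
  · rintro ⟨g', hg', m, hm, rfl⟩
    obtain ⟨γ, hγ⟩ := QuotientGroup.eq.mp hg'
    have : g' = g * SpecialLinearGroup.map (Int.castRingHom ℝ) γ⁻¹ := by
      rw [map_inv, hγ]
      group
    exact ⟨_, mulVec_ne_zero γ⁻¹ hm, by rw [this, vecOf_mul_map]⟩
  · rintro ⟨m, hm, rfl⟩
    exact ⟨g, rfl, m, hm, rfl⟩

lemma abs_le_eNorm (v : Fin n → ℝ) (i : Fin n) : |v i| ≤ eNorm v :=
  PiLp.norm_apply_le ((WithLp.equiv 2 (Fin n → ℝ)).symm v) i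

lemma eNorm_two (v : Fin 2 → ℝ) : eNorm v = √(v 0 ^ 2 + v 1 ^ 2) := by
  simp [eNorm, EuclideanSpace.norm_eq, Fin.sum_univ_two]

end Lattice

section Diophantine

variable {s : ℝ}

def approxSet (s ν : ℝ) : Set (ℤ × ℕ+) :=
  {pq | |s - (pq.1 : ℝ) / ((pq.2 : ℕ) : ℝ)| < ((pq.2 : ℕ) : ℝ) ^ (-ν)}

lemma approxSet_antitone (s : ℝ) : Antitone (approxSet s) := fun _ _ hν pq hpq =>
  hpq.trans_le (Real.rpow_le_rpow_of_exponent_le (Nat.one_le_cast.mpr pq.2.pos) (neg_le_neg hν))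

lemma approxExp_eq_top_iff : approxExp s = ⊤ ↔ ∀ k : ℕ, (approxSet s k).Infinite := by
  constructor
  · intro h k hfin
    have : approxExp s ≤ ENNReal.ofReal k := by
      refine iSup₂_le fun ν hν => ?_
      by_contra! hlt
      exact hν (hfin.subset (approxSet_antitone s (ENNReal.ofReal_lt_ofReal_iff'.mp hlt).1.le))
    simp [h] at this
  · intro h
    by_contra htop
    obtain ⟨k, hk⟩ := ENNReal.exists_nat_gt htop
    have : ENNReal.ofReal k ≤ approxExp s := le_iSup₂_of_le (k : ℝ) (h k) le_rfl
    simp at this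
    exact (this.trans_lt hk).false

lemma mem_approxSet_natCast_iff {k : ℕ} {p : ℤ} {q : ℕ+} :
    (p, q) ∈ approxSet s k ↔ ((q : ℕ) : ℝ) ^ k * |(q : ℕ) * s - p| < (q : ℕ) := by
  have hq : (0 : ℝ) < (q : ℕ) := by exact_mod_cast q.pos
  have : s - p / (q : ℕ) = ((q : ℕ) * s - p) / (q : ℕ) := by field_simp
  simp only [approxSet, Set.mem_ofPred_eq, this, abs_div, abs_of_pos hq, Real.rpow_neg hq.le,
    Real.rpow_natCast]
  rw [div_lt_iff₀ hq, ← div_eq_inv_mul, lt_div_iff₀ (by positivity), mul_comm]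

lemma exists_mem_approxSet_lt {k : ℕ} (hinf : (approxSet s k).Infinite) (M : ℕ) :
    ∃ pq ∈ approxSet s k, M < (pq.2 : ℕ) := by
  by_contra! hle
  set K : ℤ := ⌈M * (|s| + 1)⌉
  have hbox : approxSet s k ⊆ Prod.map id PNat.val ⁻¹' (Set.Icc (-K) K ×ˢ Set.Iic M) := by
    rintro ⟨p, q⟩ hpq
    have hqM : (q : ℕ) ≤ M := hle _ hpq
    have hq1 : (1 : ℝ) ≤ (q : ℕ) := Nat.one_le_cast.mpr q.pos
    have hsmall : |(q : ℕ) * s - p| < (q : ℕ) := by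
      have := mem_approxSet_natCast_iff.mp hpq
      nlinarith [one_le_pow₀ (n := k) hq1, abs_nonneg ((q : ℕ) * s - p)]
    have hp : |(p : ℝ)| ≤ K := by
      calc |(p : ℝ)| ≤ |(q : ℕ) * s| + |(q : ℕ) * s - p| := by
            simpa using abs_sub_le 0 ((q : ℕ) * s) p
        _ ≤ M * (|s| + 1) := by
          rw [abs_mul, Nat.abs_cast]
          have : ((q : ℕ) : ℝ) ≤ M := by exact_mod_cast hqM
          nlinarith [abs_nonneg s]
        _ ≤ K := Int.le_ceil _
    exact ⟨abs_le.mp (by exact_mod_cast hp), hqM⟩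
  exact hinf (((Set.finite_Icc _ _).prod (Set.finite_Iic _)).preimage
    (Prod.map_injective.mpr ⟨Function.injective_id, PNat.coe_injective⟩).injOn |>.subset hbox)

/-- Off the finite set `approxSet s k` we have `q ≤ q^k |qs - p|`; on it, irrationality makes
`q^k |qs - p| / q` positive, so `c` is the least of `1` and finitely many positive values. -/
lemma exists_pos_mul_le_of_finite (hs : Irrational s) {k : ℕ} (hfin : (approxSet s k).Finite) :
    ∃ c : ℝ, 0 < c ∧ c ≤ 1 ∧
      ∀ q : ℤ, q ≠ 0 → ∀ p : ℤ, c * |(q : ℝ)| ≤ |(q : ℝ)| ^ k * |q * s - p| := by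
  set φ : ℤ × ℕ+ → ℝ := fun pq => ((pq.2 : ℕ) : ℝ) ^ k * |(pq.2 : ℕ) * s - pq.1| / (pq.2 : ℕ)
  have hφ : ∀ pq, 0 < φ pq := fun ⟨p, q⟩ => by
    have : (q : ℕ) * s - p ≠ 0 := sub_ne_zero.mpr ((hs.natCast_mul q.ne_zero).ne_int p)
    positivity
  set T := insert 1 (hfin.toFinset.image φ)
  set c := T.min' (Finset.insert_nonempty _ _)
  have hc1 : c ≤ 1 := T.min'_le 1 (Finset.mem_insert_self _ _)
  have hcφ : ∀ pq : ℤ × ℕ+, c ≤ φ pq := fun pq => by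
    by_cases hpq : pq ∈ approxSet s k
    · exact T.min'_le _
        (Finset.mem_insert_of_mem (Finset.mem_image_of_mem φ (by simpa using hpq)))
    · refine hc1.trans ?_
      obtain ⟨p, q⟩ := pq
      rw [mem_approxSet_natCast_iff, not_lt] at hpq
      exact (one_le_div (by exact_mod_cast q.pos)).mpr hpq
  have hpos : 0 < c := by
    rcases Finset.mem_insert.mp (T.min'_mem (Finset.insert_nonempty _ _)) with h | h
    · rw [show c = 1 from h]
      exact one_pos
    · obtain ⟨pq, -, hpq⟩ := Finset.mem_image.mp h
      rw [show c = φ pq from hpq.symm]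
      exact hφ pq
  have hpnat : ∀ (p : ℤ) (q : ℕ+), c * (q : ℕ) ≤ ((q : ℕ) : ℝ) ^ k * |(q : ℕ) * s - p| :=
    fun p q => (le_div_iff₀ (by exact_mod_cast q.pos)).mp (hcφ (p, q))
  refine ⟨c, hpos, hc1, fun q hq p => ?_⟩
  set n : ℕ+ := ⟨q.natAbs, Int.natAbs_pos.mpr hq⟩
  have hqn : ((n : ℕ) : ℝ) = |(q : ℝ)| := by simp [n, Nat.cast_natAbs]
  obtain ⟨p', hp'⟩ : ∃ p' : ℤ, |(q : ℝ) * s - p| = |(n : ℕ) * s - p'| := by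
    rcases abs_choice (q : ℝ) with h | h
    · exact ⟨p, by rw [hqn, h]⟩
    · exact ⟨-p, by rw [hqn, h, ← abs_neg]; push_cast; ring_nf⟩
  have := hpnat p' n
  rwa [← hp', hqn] at this

end Diophantine

section Horocycle

variable (s t : ℝ)

lemma vecOf_hMat_mul_gMat (m : Fin 2 → ℤ) :
    vecOf 2 (hMat t * gMat s) m = ![m 0 + t * (s * m 0 + m 1), s * m 0 + m 1] := by
  rw [vecOf, Matrix.SpecialLinearGroup.coe_mul]
  ext i
  fin_cases i
  · simp [hMat, gMat, mulVec, dotProduct, Fin.sum_univ_two]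
    ring
  · simp [hMat, gMat, mulVec, dotProduct, Fin.sum_univ_two]

variable {s t}

lemma abs_fst_le_mul_eNorm (m : Fin 2 → ℤ) :
    |(m 0 : ℝ)| ≤ (1 + |t|) * eNorm (vecOf 2 (hMat t * gMat s) m) := by
  set v := vecOf 2 (hMat t * gMat s) m with hv
  have h0 := abs_le_eNorm v 0
  have h1 := abs_le_eNorm v 1
  have : (m 0 : ℝ) = v 0 - t * v 1 := by simp [hv, vecOf_hMat_mul_gMat]
  calc |(m 0 : ℝ)| ≤ |v 0| + |t| * |v 1| := by rw [this, ← abs_mul]; exact abs_sub _ _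
    _ ≤ (1 + |t|) * eNorm v := by nlinarith [abs_nonneg t]

lemma abs_snd_le_mul_eNorm (m : Fin 2 → ℤ) :
    |(m 1 : ℝ)| ≤ (1 + |s|) * (1 + |t|) * eNorm (vecOf 2 (hMat t * gMat s) m) := by
  have h0 := abs_fst_le_mul_eNorm (s := s) (t := t) m
  set v := vecOf 2 (hMat t * gMat s) m with hv
  have h1 := abs_le_eNorm v 1
  have : (m 1 : ℝ) = v 1 - s * m 0 := by simp [hv, vecOf_hMat_mul_gMat]
  calc |(m 1 : ℝ)| ≤ |v 1| + |s| * |(m 0 : ℝ)| := by rw [this, ← abs_mul]; exact abs_sub _ _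
    _ ≤ (1 + |s|) * (1 + |t|) * eNorm v := by
      nlinarith [mul_nonneg (abs_nonneg t) ((abs_nonneg _).trans h1),
        mul_le_mul_of_nonneg_left h0 (abs_nonneg s)]

lemma one_le_mul_eNorm {m : Fin 2 → ℤ} (hm : m ≠ 0) :
    1 ≤ (1 + |s|) * (1 + |t|) * eNorm (vecOf 2 (hMat t * gMat s) m) := by
  have hE := (abs_nonneg _).trans (abs_le_eNorm (vecOf 2 (hMat t * gMat s) m) 0)
  by_cases h0 : m 0 = 0
  · have h1 : m 1 ≠ 0 := fun h1 => hm (by ext i; fin_cases i <;> assumption)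
    exact (by exact_mod_cast Int.one_le_abs h1 : (1 : ℝ) ≤ |(m 1 : ℝ)|).trans
      (abs_snd_le_mul_eNorm m)
  · have : (1 : ℝ) ≤ |(m 0 : ℝ)| := by exact_mod_cast Int.one_le_abs h0
    nlinarith [abs_fst_le_mul_eNorm (s := s) (t := t) m, mul_nonneg (abs_nonneg s) (mul_nonneg
      (add_nonneg zero_le_one (abs_nonneg t)) hE)]

lemma eNorm_hMat_mul_gMat_pos {m : Fin 2 → ℤ} (hm : m ≠ 0) :
    0 < eNorm (vecOf 2 (hMat t * gMat s) m) := by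
  have h := one_le_mul_eNorm (s := s) (t := t) hm
  by_contra! hE
  have hC : (0 : ℝ) ≤ (1 + |s|) * (1 + |t|) := by positivity
  nlinarith [mul_nonpos_of_nonneg_of_nonpos hC hE]

lemma one_div_eNorm_le_alpha1 {m : Fin 2 → ℤ} (hm : m ≠ 0) :
    1 / eNorm (vecOf 2 (hMat t * gMat s) m) ≤
      alpha1 2 (QuotientGroup.mk (hMat t * gMat s)) := by
  rw [alpha1_mk]
  refine le_csSup ⟨(1 + |s|) * (1 + |t|), ?_⟩ ⟨m, hm, rfl⟩
  rintro _ ⟨m', hm', rfl⟩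
  rw [div_le_iff₀ (eNorm_hMat_mul_gMat_pos hm')]
  exact one_le_mul_eNorm hm'

lemma vecOf_hMat_mul_gMat_zero_one : vecOf 2 (hMat t * gMat s) ![0, 1] = ![t, 1] := by
  simp [vecOf_hMat_mul_gMat]

lemma zero_one_ne_zero : (![0, 1] : Fin 2 → ℤ) ≠ 0 := fun h => by simpa using congrFun h 1

lemma alpha1_hMat_mul_gMat_pos : 0 < alpha1 2 (QuotientGroup.mk (hMat t * gMat s)) :=
  (one_div_pos.mpr (eNorm_hMat_mul_gMat_pos zero_one_ne_zero)).trans_le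
    (one_div_eNorm_le_alpha1 zero_one_ne_zero)

lemma neg_log_eNorm_le_log_alpha1 {m : Fin 2 → ℤ} (hm : m ≠ 0) :
    -Real.log (eNorm (vecOf 2 (hMat t * gMat s) m)) ≤
      Real.log (alpha1 2 (QuotientGroup.mk (hMat t * gMat s))) := by
  rw [← Real.log_inv, ← one_div]
  exact Real.log_le_log (one_div_pos.mpr (eNorm_hMat_mul_gMat_pos hm))
    (one_div_eNorm_le_alpha1 hm)

lemma log_alpha1_le {B : ℝ}
    (h : ∀ m : Fin 2 → ℤ, m ≠ 0 → -Real.log (eNorm (vecOf 2 (hMat t * gMat s) m)) ≤ B) :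
    Real.log (alpha1 2 (QuotientGroup.mk (hMat t * gMat s))) ≤ B := by
  rw [Real.log_le_iff_le_exp alpha1_hMat_mul_gMat_pos, alpha1_mk]
  refine Real.sSup_le ?_ (Real.exp_pos B).le
  rintro _ ⟨m, hm, rfl⟩
  rw [one_div, ← Real.exp_log (eNorm_hMat_mul_gMat_pos hm), ← Real.exp_neg]
  exact Real.exp_le_exp.mpr (h m hm)

lemma neg_log_one_add_abs_le_log_alpha1 :
    -Real.log (1 + |t|) ≤ Real.log (alpha1 2 (QuotientGroup.mk (hMat t * gMat s))) := by
  refine le_trans ?_ (neg_log_eNorm_le_log_alpha1 zero_one_ne_zero)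
  have hE : eNorm (vecOf 2 (hMat t * gMat s) ![0, 1]) ≤ 1 + |t| := by
    rw [vecOf_hMat_mul_gMat_zero_one, eNorm_two, sqrt_le_left (by positivity)]
    simp only [Matrix.cons_val_zero, Matrix.cons_val_one]
    nlinarith [abs_nonneg t, sq_abs t]
  exact neg_le_neg (Real.log_le_log (eNorm_hMat_mul_gMat_pos zero_one_ne_zero) hE)

lemma log_alpha1_le_log_add_log :
    Real.log (alpha1 2 (QuotientGroup.mk (hMat t * gMat s))) ≤
      Real.log (1 + |s|) + Real.log (1 + |t|) := by
  refine log_alpha1_le fun m hm => ?_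
  have hE := eNorm_hMat_mul_gMat_pos (s := s) (t := t) hm
  have := Real.log_le_log one_pos (one_le_mul_eNorm (s := s) (t := t) hm)
  rw [Real.log_one, Real.log_mul (by positivity) hE.ne',
    Real.log_mul (by positivity) (by positivity)] at this
  linarith

lemma mul_one_add_abs_le_pow {c : ℝ} {k : ℕ} (hc1 : c ≤ 1) (hk : k ≠ 0)
    (hdioph : ∀ q : ℤ, q ≠ 0 → ∀ p : ℤ, c * |(q : ℝ)| ≤ |(q : ℝ)| ^ k * |q * s - p|)
    {m : Fin 2 → ℤ} (hm : m ≠ 0) :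
    c * (1 + |t|) ≤ ((1 + |t|) * eNorm (vecOf 2 (hMat t * gMat s) m)) ^ k := by
  have hE := eNorm_hMat_mul_gMat_pos (s := s) (t := t) hm
  have hv1 : |(m 0 : ℝ) * s - ((-m 1 : ℤ) : ℝ)| ≤ eNorm (vecOf 2 (hMat t * gMat s) m) := by
    have h := abs_le_eNorm (vecOf 2 (hMat t * gMat s) m) 1
    have e : vecOf 2 (hMat t * gMat s) m 1 = (m 0 : ℝ) * s - ((-m 1 : ℤ) : ℝ) := by
      simp [vecOf_hMat_mul_gMat]
      ring
    rwa [e] at h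
  have hq := abs_fst_le_mul_eNorm (s := s) (t := t) m
  set X := (1 + |t|) * eNorm (vecOf 2 (hMat t * gMat s) m)
  obtain ⟨j, rfl⟩ := Nat.exists_eq_succ_of_ne_zero hk
  by_cases h0 : m 0 = 0
  · have h1 : m 1 ≠ 0 := fun h1 => hm (by ext i; fin_cases i <;> assumption)
    have hm1 : (1 : ℝ) ≤ |(m 1 : ℝ)| := by exact_mod_cast Int.one_le_abs h1
    have hE1 : 1 ≤ eNorm (vecOf 2 (hMat t * gMat s) m) := hm1.trans (by simpa [h0] using hv1)
    have hX : 1 + |t| ≤ X := le_mul_of_one_le_right (by positivity) hE1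
    calc c * (1 + |t|) ≤ 1 + |t| := mul_le_of_le_one_left (by positivity) hc1
      _ ≤ X := hX
      _ ≤ X ^ (j + 1) := le_self_pow₀ ((le_add_of_nonneg_right (abs_nonneg t)).trans hX) hk
  · have hq0 : 0 < |(m 0 : ℝ)| := by positivity
    have hcq : c ≤ |(m 0 : ℝ)| ^ j * eNorm (vecOf 2 (hMat t * gMat s) m) := by
      refine le_of_mul_le_mul_right ?_ hq0
      calc c * |(m 0 : ℝ)| ≤ |(m 0 : ℝ)| ^ (j + 1) * |(m 0 : ℝ) * s - ((-m 1 : ℤ) : ℝ)| :=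
            hdioph _ h0 _
        _ ≤ |(m 0 : ℝ)| ^ (j + 1) * eNorm (vecOf 2 (hMat t * gMat s) m) := by gcongr
        _ = _ := by ring
    calc c * (1 + |t|) ≤ X ^ j * eNorm (vecOf 2 (hMat t * gMat s) m) * (1 + |t|) := by
          gcongr
          exact hcq.trans (by gcongr)
      _ = X ^ (j + 1) := by ring

lemma mul_log_alpha1_le {c : ℝ} {k : ℕ} (hc : 0 < c) (hc1 : c ≤ 1) (hk : k ≠ 0)
    (hdioph : ∀ q : ℤ, q ≠ 0 → ∀ p : ℤ, c * |(q : ℝ)| ≤ |(q : ℝ)| ^ k * |q * s - p|) :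
    k * Real.log (alpha1 2 (QuotientGroup.mk (hMat t * gMat s))) ≤
      (k - 1) * Real.log (1 + |t|) - Real.log c := by
  have hk0 : (0 : ℝ) < k := by positivity
  rw [← le_div_iff₀' hk0]
  refine log_alpha1_le fun m hm => ?_
  have hE := eNorm_hMat_mul_gMat_pos (s := s) (t := t) hm
  have h := Real.log_le_log (by positivity) (mul_one_add_abs_le_pow (t := t) hc1 hk hdioph hm)
  rw [Real.log_mul hc.ne' (by positivity), Real.log_pow, Real.log_mul (by positivity) hE.ne'] at h
  rw [le_div_iff₀' hk0]
  linarith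

/-- For `t = -q / (qs - p)` the vector `(q, -p)` of `Λ_s` becomes `(0, qs - p)` in `h_t Λ_s`. -/
lemma exists_pow_lt_abs_log_sub_log_le_log_alpha1 (hs : Irrational s) {k : ℕ} {p : ℤ} {q : ℕ}
    (hq : q ≠ 0) (hpq : (q : ℝ) ^ k * |q * s - p| < q) :
    ∃ t : ℝ, (q : ℝ) ^ k < |t| ∧
      Real.log |t| - Real.log q ≤ Real.log (alpha1 2 (QuotientGroup.mk (hMat t * gMat s))) := by
  have hr0 : (q : ℝ) * s - p ≠ 0 := sub_ne_zero.mpr ((hs.natCast_mul hq).ne_int p)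
  have hr : 0 < |(q : ℝ) * s - p| := abs_pos.mpr hr0
  have hq' : (0 : ℝ) < q := by positivity
  set t := -(q / (q * s - p))
  have ht : |t| = q / |q * s - p| := by rw [abs_neg, abs_div, Nat.abs_cast]
  refine ⟨t, by rwa [ht, lt_div_iff₀ hr], ?_⟩
  have hm : (![(q : ℤ), -p] : Fin 2 → ℤ) ≠ 0 := fun h => hq (by simpa using congrFun h 0)
  have hv : vecOf 2 (hMat t * gMat s) ![(q : ℤ), -p] = ![0, q * s - p] := by
    rw [vecOf_hMat_mul_gMat]
    ext i
    fin_cases i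
    · simp [t]
      field_simp
      ring
    · simp
      ring
  have := neg_log_eNorm_le_log_alpha1 (s := s) (t := t) hm
  rw [hv, eNorm_two] at this
  simp only [Matrix.cons_val_zero, Matrix.cons_val_one, zero_pow two_ne_zero, zero_add,
    Real.sqrt_sq_eq_abs] at this
  rw [ht, Real.log_div hq'.ne' hr.ne']
  linarith

end Horocycle

section Asymptotics

variable {α : Type*} {l : Filter α}

lemma eventually_div_le_add_of_le_mul_add {u w : α → ℝ} {a K ε : ℝ}
    (hw : Tendsto w l atTop) (hε : 0 < ε) (h : ∀ᶠ x in l, u x ≤ a * w x + K) :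
    ∀ᶠ x in l, u x / w x ≤ a + ε := by
  filter_upwards [h, hw.eventually_gt_atTop 0, hw.eventually_ge_atTop (K / ε)] with x hx hw0 hwK
  rw [div_le_iff₀ hw0]
  rw [div_le_iff₀ hε] at hwK
  linarith

lemma limsup_le_of_forall_pos_eventually_le_add [NeBot l] {f : α → ℝ} {a b : ℝ}
    (hb : ∀ᶠ x in l, b ≤ f x) (h : ∀ ε > 0, ∀ᶠ x in l, f x ≤ a + ε) : limsup f l ≤ a :=
  _root_.le_of_forall_pos_le_add fun ε hε =>
    limsup_le_of_le (isCoboundedUnder_le_of_eventually_le l hb) (h ε hε)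

lemma le_limsup_of_forall_pos_frequently_le {f : α → ℝ} {a : ℝ}
    (hf : IsBoundedUnder (· ≤ ·) l f) (h : ∀ ε > 0, ∃ᶠ x in l, a - ε ≤ f x) : a ≤ limsup f l :=
  _root_.le_of_forall_pos_le_add fun ε hε => by
    linarith [le_limsup_of_frequently_le (h ε hε) hf]

end Asymptotics

instance : NeBot (comap (fun t : ℝ => |t|) atTop) :=
  neBot_of_le tendsto_abs_atTop_atTop.le_comap

lemma tendsto_log_abs_comap_abs_atTop :
    Tendsto (fun t : ℝ => Real.log |t|) (comap (fun t : ℝ => |t|) atTop) atTop :=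
  Real.tendsto_log_atTop.comp tendsto_comap

lemma eventually_log_one_add_abs_le :
    ∀ᶠ t : ℝ in comap (fun t : ℝ => |t|) atTop,
      Real.log (1 + |t|) ≤ Real.log |t| + Real.log 2 := by
  filter_upwards [tendsto_comap.eventually_ge_atTop 1] with t ht
  rw [← Real.log_mul (by positivity) two_ne_zero]
  exact Real.log_le_log (by positivity) (by linarith)

section Exponent

def alpha1Exponent (s t : ℝ) : ℝ :=
  Real.log (alpha1 2 (QuotientGroup.mk (hMat t * gMat s))) / Real.log |t|

lemma eventually_neg_two_le_alpha1Exponent (s : ℝ) :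
    ∀ᶠ t in comap (fun t : ℝ => |t|) atTop, -2 ≤ alpha1Exponent s t := by
  filter_upwards [eventually_log_one_add_abs_le,
    tendsto_log_abs_comap_abs_atTop.eventually_ge_atTop (Real.log 2)] with t ht ht2
  have := Real.log_pos one_lt_two
  rw [alpha1Exponent, le_div_iff₀ (by linarith)]
  linarith [neg_log_one_add_abs_le_log_alpha1 (s := s) (t := t)]

lemma eventually_alpha1Exponent_le_one_add (s : ℝ) {ε : ℝ} (hε : 0 < ε) :
    ∀ᶠ t in comap (fun t : ℝ => |t|) atTop, alpha1Exponent s t ≤ 1 + ε :=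
  eventually_div_le_add_of_le_mul_add (K := Real.log 2 + Real.log (1 + |s|))
    tendsto_log_abs_comap_abs_atTop hε (eventually_log_one_add_abs_le.mono fun t ht => by
      linarith [log_alpha1_le_log_add_log (s := s) (t := t)])

variable {s : ℝ}

lemma exists_lt_one_eventually_alpha1Exponent_le (hs : Irrational s) {k : ℕ}
    (hfin : (approxSet s k).Finite) :
    ∃ a < 1, ∀ ε > 0, ∀ᶠ t in comap (fun t : ℝ => |t|) atTop, alpha1Exponent s t ≤ a + ε := by
  have hfin' : (approxSet s (k + 1 : ℕ)).Finite :=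
    hfin.subset (approxSet_antitone s (by push_cast; linarith))
  obtain ⟨c, hc, hc1, hdioph⟩ := exists_pos_mul_le_of_finite hs hfin'
  have hk : (0 : ℝ) < k + 1 := by positivity
  refine ⟨k / (k + 1), (div_lt_one hk).mpr (by linarith), fun ε hε => ?_⟩
  refine eventually_div_le_add_of_le_mul_add
    (K := k / (k + 1) * Real.log 2 - Real.log c / (k + 1)) tendsto_log_abs_comap_abs_atTop hε
    (eventually_log_one_add_abs_le.mono fun t ht => ?_)
  have h := mul_log_alpha1_le (t := t) hc hc1 (Nat.succ_ne_zero k) hdioph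
  push_cast at h
  rw [← mul_le_mul_iff_of_pos_left hk]
  have e : (k + 1) * (k / (k + 1) * Real.log |t| +
      (k / (k + 1) * Real.log 2 - Real.log c / (k + 1))) =
      k * (Real.log |t| + Real.log 2) - Real.log c := by
    field_simp
    ring
  rw [e]
  nlinarith [mul_le_mul_of_nonneg_left ht k.cast_nonneg]

lemma frequently_one_sub_le_alpha1Exponent (hs : Irrational s)
    (h : ∀ k : ℕ, (approxSet s k).Infinite) {ε : ℝ} (hε : 0 < ε) :
    ∃ᶠ t in comap (fun t : ℝ => |t|) atTop, 1 - ε ≤ alpha1Exponent s t := by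
  obtain ⟨k, hk⟩ := exists_nat_one_div_lt hε
  rw [frequently_comap, frequently_atTop]
  intro a
  obtain ⟨⟨p, q⟩, hpq, hqa⟩ := exists_mem_approxSet_lt (h (k + 1)) ⌈max a 1⌉₊
  obtain ⟨t, hqt, hlog⟩ :=
    exists_pow_lt_abs_log_sub_log_le_log_alpha1 hs q.ne_zero (mem_approxSet_natCast_iff.mp hpq)
  have hqa' : max a 1 < (q : ℕ) := Nat.lt_of_ceil_lt hqa
  have hq1 : (1 : ℝ) < (q : ℕ) := (le_max_right a 1).trans_lt hqa'
  have hqq : ((q : ℕ) : ℝ) ≤ (q : ℕ) ^ (k + 1) := le_self_pow₀ hq1.le (Nat.succ_ne_zero k)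
  have hlogq : 0 < Real.log (q : ℕ) := Real.log_pos hq1
  have hlogt : (k + 1) * Real.log (q : ℕ) < Real.log |t| := by
    have := Real.log_lt_log (by positivity) hqt
    rwa [Real.log_pow, Nat.cast_succ] at this
  refine ⟨|t|, (le_max_left a 1).trans (hqa'.le.trans (hqq.trans hqt.le)), t, rfl, ?_⟩
  have hlogt0 : 0 < Real.log |t| := by nlinarith
  have hlogq_le : Real.log (q : ℕ) ≤ ε * Real.log |t| :=
    calc Real.log (q : ℕ) ≤ 1 / (k + 1) * Real.log |t| := by
          rw [one_div_mul_eq_div, le_div_iff₀ (by positivity)]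
          linarith
      _ ≤ ε * Real.log |t| := by gcongr
  rw [alpha1Exponent, le_div_iff₀ hlogt0]
  linarith

end Exponent

/-- For irrational `s`, `limsup_{|t|→∞} log α₁(h_t Λ_s)/log|t| = 1` if and only if
`s` is a Liouville number, i.e. `μ(s) = ∞`. -/
theorem liouville_characterization (s : ℝ) (hs : Irrational s) :
    Filter.limsup
        (fun t : ℝ => Real.log (alpha1 2 (QuotientGroup.mk (hMat t * gMat s))) / Real.log |t|)
        (Filter.comap (fun t : ℝ => |t|) atTop) = 1 ↔ approxExp s = ⊤ := by
  change limsup (alpha1Exponent s) _ = 1 ↔ _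
  have hbelow := eventually_neg_two_le_alpha1Exponent s
  rw [approxExp_eq_top_iff]
  refine ⟨fun hlim k => ?_, fun h => le_antisymm ?_ ?_⟩
  · by_contra hk
    obtain ⟨a, ha, hle⟩ := exists_lt_one_eventually_alpha1Exponent_le hs (Set.not_infinite.mp hk)
    linarith [limsup_le_of_forall_pos_eventually_le_add hbelow hle]
  · exact limsup_le_of_forall_pos_eventually_le_add hbelow fun ε =>
      eventually_alpha1Exponent_le_one_add s
  · exact le_limsup_of_forall_pos_frequently_le
      (isBoundedUnder_of_eventually_le (eventually_alpha1Exponent_le_one_add s one_pos))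
      fun ε => frequently_one_sub_le_alpha1Exponent hs h
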